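/- arXiv:2011.08289 — 2 statements merged into one kernel-verified Lean document; each statement's English description precedes it below -/
import Mathlib

section
/- Let n ≥ 2. The function H_n(Z) = (N(Z)^{1/2})^{1−n} is holomorphic on ℂ_G^{n+1} and is complex harmonic there: □_ℂ H_n = Σ_{j=0}^n ∂²H_n/∂z_j² = 0 on ℂ_G^{n+1}. -/
open scoped BigOperators

/-- `N(Z) = ∑_{j=0}^n z_j²` on `ℂ^{n+1}`. -/
noncomputable def Ncomplex (n : ℕ) (Z : Fin (n + 1) → ℂ) : ℂ := ∑ j, Z j ^ 2

/-- The domain `ℂ_G^{n+1} = ℂ^{n+1} ∖ {Z : N(Z) is real and ≤ 0}`. -/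
def CG (n : ℕ) : Set (Fin (n + 1) → ℂ) :=
  {Z | ¬((Ncomplex n Z).im = 0 ∧ (Ncomplex n Z).re ≤ 0)}

/-- `H_n(Z) = (N(Z)^{1/2})^{1-n}`, where `N(Z)^{1/2}` is the branch of the square root
with positive real part (the principal branch, realized via `Complex.cpow`). -/
noncomputable def Hfun (n : ℕ) (Z : Fin (n + 1) → ℂ) : ℂ :=
  (Ncomplex n Z ^ ((1 : ℂ) / 2)) ^ ((1 : ℤ) - (n : ℤ))

/-- The `j`-th complex partial derivative. -/
noncomputable def pdC {n : ℕ} (f : (Fin (n + 1) → ℂ) → ℂ) (j : Fin (n + 1))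
    (Z : Fin (n + 1) → ℂ) : ℂ :=
  fderiv ℂ f Z (Pi.single j 1)

/-- The complex Laplacian `□_ℂ f = ∑_j ∂²f/∂z_j²`. -/
noncomputable def laplacianC {n : ℕ} (f : (Fin (n + 1) → ℂ) → ℂ)
    (Z : Fin (n + 1) → ℂ) : ℂ :=
  ∑ j, pdC (pdC f j) j Z

/-!
For a function of `N` alone the chain rule gives `∂_j φ(N(Z)) = 2 z_j φ'(N(Z))`, hence
`□_ℂ φ(N) = 4 N φ''(N) + 2 (n + 1) φ'(N)`. For `φ(w) = (w^{1/2})^m`, holomorphic on the slit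
plane (which `N` maps `ℂ_G^{n+1}` into), this is `m (m + n - 1) (N^{1/2})^{m-2}`, and `m = 1 - n`
kills it.
-/

open Complex Topology

lemma hasDerivAt_cpow_half_zpow (m : ℤ) {w : ℂ} (hw : w ∈ slitPlane) :
    HasDerivAt (fun w : ℂ => (w ^ ((1 : ℂ) / 2)) ^ m)
      (m / 2 * (w ^ ((1 : ℂ) / 2)) ^ (m - 2)) w := by
  have hs : w ^ ((1 : ℂ) / 2) ≠ 0 := by simp [cpow_eq_zero_iff, slitPlane_ne_zero hw]
  have hsqrt := (hasStrictDerivAt_cpow_const (c := (1 : ℂ) / 2) hw).hasDerivAt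
  refine ((hasDerivAt_zpow m _ (Or.inl hs)).comp w hsqrt).congr_deriv ?_
  rw [show (1 : ℂ) / 2 - 1 = -(1 / 2) by ring, cpow_neg,
    show m - 2 = m - 1 - 1 by ring, zpow_sub_one₀ hs (m - 1)]
  ring

lemma mul_cpow_half_zpow_sub_two {w : ℂ} (hw : w ≠ 0) (m : ℤ) :
    w * (w ^ ((1 : ℂ) / 2)) ^ (m - 2) = (w ^ ((1 : ℂ) / 2)) ^ m := by
  have hs : w ^ ((1 : ℂ) / 2) ≠ 0 := by simp [cpow_eq_zero_iff, hw]
  have hsq : (w ^ ((1 : ℂ) / 2)) ^ (2 : ℤ) = w := by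
    rw [one_div, zpow_ofNat]
    exact cpow_ofNat_inv_pow w 2
  calc w * (w ^ ((1 : ℂ) / 2)) ^ (m - 2)
      = (w ^ ((1 : ℂ) / 2)) ^ (2 : ℤ) * (w ^ ((1 : ℂ) / 2)) ^ (m - 2) := by rw [hsq]
    _ = (w ^ ((1 : ℂ) / 2)) ^ m := by rw [← zpow_add₀ hs, add_sub_cancel]

section SumOfSquares

variable {n : ℕ}

lemma mem_CG_iff {Z : Fin (n + 1) → ℂ} : Z ∈ CG n ↔ Ncomplex n Z ∈ slitPlane := by
  rw [mem_slitPlane_iff_not_le_zero, Complex.le_def, and_comm]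
  rfl

lemma hasFDerivAt_Ncomplex (Z : Fin (n + 1) → ℂ) :
    HasFDerivAt (Ncomplex n)
      (∑ j, (2 * Z j) • (ContinuousLinearMap.proj j : (Fin (n + 1) → ℂ) →L[ℂ] ℂ))
      Z := by
  refine (HasFDerivAt.fun_sum (u := Finset.univ) fun j _ =>
    (hasFDerivAt_apply (𝕜 := ℂ) j Z).pow 2).congr_fderiv ?_
  simp

lemma hasFDerivAt_comp_Ncomplex {φ : ℂ → ℂ} {φ' : ℂ} {Z : Fin (n + 1) → ℂ}
    (hφ : HasDerivAt φ φ' (Ncomplex n Z)) :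
    HasFDerivAt (fun W => φ (Ncomplex n W))
      (φ' • ∑ j, (2 * Z j) •
        (ContinuousLinearMap.proj j : (Fin (n + 1) → ℂ) →L[ℂ] ℂ)) Z :=
  hφ.comp_hasFDerivAt Z (hasFDerivAt_Ncomplex Z)

lemma pdC_comp_Ncomplex {φ : ℂ → ℂ} {φ' : ℂ} {Z : Fin (n + 1) → ℂ}
    (hφ : HasDerivAt φ φ' (Ncomplex n Z)) (j : Fin (n + 1)) :
    pdC (fun W => φ (Ncomplex n W)) j Z = φ' * (2 * Z j) := by
  simp [pdC, (hasFDerivAt_comp_Ncomplex hφ).fderiv, Pi.single_apply]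

lemma pdC_pdC_comp_Ncomplex {φ φ' : ℂ → ℂ} {φ'' : ℂ} {U : Set ℂ} (hU : IsOpen U)
    (hφ : ∀ w ∈ U, HasDerivAt φ (φ' w) w) {Z : Fin (n + 1) → ℂ}
    (hφ' : HasDerivAt φ' φ'' (Ncomplex n Z)) (hZ : Ncomplex n Z ∈ U) (j : Fin (n + 1)) :
    pdC (pdC (fun W => φ (Ncomplex n W)) j) j Z
      = φ'' * (2 * Z j) ^ 2 + 2 * φ' (Ncomplex n Z) := by
  have hnear :
      pdC (fun W => φ (Ncomplex n W)) j =ᶠ[𝓝 Z] fun W => φ' (Ncomplex n W) * (2 * W j) := by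
    filter_upwards [(hasFDerivAt_Ncomplex Z).continuousAt.preimage_mem_nhds (hU.mem_nhds hZ)]
      with W hW using pdC_comp_Ncomplex (hφ _ hW) j
  have hprod :=
    (hasFDerivAt_comp_Ncomplex hφ').fun_mul ((hasFDerivAt_apply (𝕜 := ℂ) j Z).const_mul 2)
  rw [pdC, hnear.fderiv_eq, hprod.fderiv]
  simp only [add_apply, smul_apply, sum_apply, ContinuousLinearMap.proj_apply, Pi.single_apply,
    smul_eq_mul, mul_ite, mul_one, mul_zero, Finset.sum_ite_eq', Finset.mem_univ, if_true]
  ring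

theorem laplacianC_comp_Ncomplex {φ φ' : ℂ → ℂ} {φ'' : ℂ} {U : Set ℂ} (hU : IsOpen U)
    (hφ : ∀ w ∈ U, HasDerivAt φ (φ' w) w) {Z : Fin (n + 1) → ℂ}
    (hφ' : HasDerivAt φ' φ'' (Ncomplex n Z)) (hZ : Ncomplex n Z ∈ U) :
    laplacianC (fun W => φ (Ncomplex n W)) Z
      = 4 * φ'' * Ncomplex n Z + 2 * (n + 1) * φ' (Ncomplex n Z) := by
  rw [laplacianC, Finset.sum_congr rfl fun j _ => pdC_pdC_comp_Ncomplex hU hφ hφ' hZ j,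
    Finset.sum_add_distrib, Finset.sum_const, Finset.card_univ, Fintype.card_fin, nsmul_eq_mul,
    Ncomplex, Finset.mul_sum]
  push_cast
  congr 1
  · exact Finset.sum_congr rfl fun j _ => by ring
  · ring

theorem differentiableOn_cpow_half_zpow_Ncomplex (m : ℤ) :
    DifferentiableOn ℂ (fun Z => (Ncomplex n Z ^ ((1 : ℂ) / 2)) ^ m) (CG n) := fun _ hZ =>
  (hasFDerivAt_comp_Ncomplex (hasDerivAt_cpow_half_zpow m (mem_CG_iff.1 hZ)))
    |>.differentiableAt.differentiableWithinAt

theorem laplacianC_cpow_half_zpow_Ncomplex (m : ℤ) {Z : Fin (n + 1) → ℂ} (hZ : Z ∈ CG n) :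
    laplacianC (fun Z => (Ncomplex n Z ^ ((1 : ℂ) / 2)) ^ m) Z
      = m * (m + n - 1) * (Ncomplex n Z ^ ((1 : ℂ) / 2)) ^ (m - 2) := by
  have hN := mem_CG_iff.1 hZ
  rw [laplacianC_comp_Ncomplex isOpen_slitPlane (fun w hw => hasDerivAt_cpow_half_zpow m hw)
    ((hasDerivAt_cpow_half_zpow (m - 2) hN).const_mul _) hN]
  push_cast
  linear_combination (m * (m - 2) : ℂ) * mul_cpow_half_zpow_sub_two (slitPlane_ne_zero hN) (m - 2)

end SumOfSquares

theorem Hfun_holomorphic_and_harmonic_general (n : ℕ) :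
    DifferentiableOn ℂ (Hfun n) (CG n) ∧ ∀ Z ∈ CG n, laplacianC (Hfun n) Z = 0 := by
  refine ⟨differentiableOn_cpow_half_zpow_Ncomplex _, fun Z hZ => ?_⟩
  unfold Hfun
  rw [laplacianC_cpow_half_zpow_Ncomplex _ hZ]
  push_cast
  ring

/-- for `n ≥ 2`, the function `H_n(Z) = (N(Z)^{1/2})^{1-n}` is holomorphic
on `ℂ_G^{n+1}` and complex harmonic there: `□_ℂ H_n = 0` on `ℂ_G^{n+1}`. -/
theorem Hfun_holomorphic_and_harmonic (n : ℕ) (hn : 2 ≤ n) :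
    DifferentiableOn ℂ (Hfun n) (CG n) ∧ ∀ Z ∈ CG n, laplacianC (Hfun n) Z = 0 :=
  Hfun_holomorphic_and_harmonic_general n
end

section
/- Fix θ_0 ∈ (0, π/4) and nonnegative integers p, q. For every smooth function g : [π/4 − θ_0, π/4 + θ_0] → ℂ, both limits lim_{ε→0⁺} ∫_{π/4−θ_0}^{π/4+θ_0} g(θ) (cos(2θ) + iε)^{−(p+q+3)/2} dθ and lim_{ε→0⁻} ∫_{π/4−θ_0}^{π/4+θ_0} g(θ) (cos(2θ) + iε)^{−(p+q+3)/2} dθ exist in ℂ. -/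
open scoped BigOperators
open Real Filter

open Real Filter MeasureTheory Set Topology

noncomputable section
namespace Dist13

lemma mk_im (x ε : ℝ) : ((x:ℂ) + (ε:ℂ)*Complex.I).im = ε := by simp
lemma mk_re (x ε : ℝ) : ((x:ℂ) + (ε:ℂ)*Complex.I).re = x := by simp

lemma mk_ne_zero_of_eps {ε : ℝ} (hε : ε ≠ 0) (x : ℝ) : ((x:ℂ) + (ε:ℂ)*Complex.I) ≠ 0 :=
  fun h => hε (by simpa using congrArg Complex.im h)

lemma mk_ne_zero_of_re {x : ℝ} (hx : x ≠ 0) (ε : ℝ) : ((x:ℂ) + (ε:ℂ)*Complex.I) ≠ 0 :=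
  fun h => hx (by simpa using congrArg Complex.re h)

lemma mk_mem_slit {ε : ℝ} (hε : ε ≠ 0) (x : ℝ) : ((x:ℂ) + (ε:ℂ)*Complex.I) ∈ Complex.slitPlane := by
  rw [Complex.mem_slitPlane_iff]
  exact Or.inr (by simpa using hε)

lemma tendsto_cpow_of_log {l : Filter ℝ} {x : ℝ} (hx : x ≠ 0)
    (hlog : ∃ w, Tendsto (fun ε : ℝ => Complex.log ((x:ℂ) + (ε:ℂ)*Complex.I)) l (𝓝 w)) (s : ℂ) :
    ∃ w, Tendsto (fun ε : ℝ => ((x:ℂ) + (ε:ℂ)*Complex.I) ^ s) l (𝓝 w) := by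
  obtain ⟨w, hw⟩ := hlog
  refine ⟨Complex.exp (w * s), ?_⟩
  have heq : ∀ ε : ℝ, ((x:ℂ) + (ε:ℂ)*Complex.I) ^ s
      = Complex.exp (Complex.log ((x:ℂ)+(ε:ℂ)*Complex.I) * s) :=
    fun ε => Complex.cpow_def_of_ne_zero (mk_ne_zero_of_re hx ε) s
  simp only [heq]
  exact (hw.mul_const s).cexp

lemma tendsto_log_pos {x : ℝ} (hx : x ≠ 0) :
    ∃ w, Tendsto (fun ε : ℝ => Complex.log ((x:ℂ) + (ε:ℂ)*Complex.I)) (𝓝[>] (0:ℝ)) (𝓝 w) := by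
  have hc : Continuous (fun ε : ℝ => (x:ℂ) + (ε:ℂ)*Complex.I) := by continuity
  have hmap : Tendsto (fun ε : ℝ => (x:ℂ) + (ε:ℂ)*Complex.I) (𝓝[>] (0:ℝ)) (𝓝 (x:ℂ)) := by
    have := (hc.tendsto 0).mono_left (nhdsWithin_le_nhds (s := Set.Ioi (0:ℝ)))
    simpa using this
  rcases lt_or_gt_of_ne hx with hneg | hpos
  · have h2 : Tendsto (fun ε : ℝ => (x:ℂ) + (ε:ℂ)*Complex.I) (𝓝[>] (0:ℝ))
        (𝓝[{z : ℂ | 0 ≤ z.im}] (x:ℂ)) := by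
      rw [tendsto_nhdsWithin_iff]
      refine ⟨hmap, ?_⟩
      filter_upwards [self_mem_nhdsWithin] with ε (hε : ε ∈ Ioi 0)
      simp [Set.mem_setOf_eq, le_of_lt (Set.mem_Ioi.mp hε)]
    exact ⟨_, (Complex.tendsto_log_nhdsWithin_im_nonneg_of_re_neg_of_im_zero
        (z := (x:ℂ)) (by simpa using hneg) (by simp)).comp h2⟩
  · exact ⟨_, (continuousAt_clog (Or.inl (by simpa using hpos))).tendsto.comp hmap⟩

lemma tendsto_log_neg {x : ℝ} (hx : x ≠ 0) :
    ∃ w, Tendsto (fun ε : ℝ => Complex.log ((x:ℂ) + (ε:ℂ)*Complex.I)) (𝓝[<] (0:ℝ)) (𝓝 w) := by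
  have hc : Continuous (fun ε : ℝ => (x:ℂ) + (ε:ℂ)*Complex.I) := by continuity
  have hmap : Tendsto (fun ε : ℝ => (x:ℂ) + (ε:ℂ)*Complex.I) (𝓝[<] (0:ℝ)) (𝓝 (x:ℂ)) := by
    have := (hc.tendsto 0).mono_left (nhdsWithin_le_nhds (s := Set.Iio (0:ℝ)))
    simpa using this
  rcases lt_or_gt_of_ne hx with hneg | hpos
  · have h2 : Tendsto (fun ε : ℝ => (x:ℂ) + (ε:ℂ)*Complex.I) (𝓝[<] (0:ℝ))
        (𝓝[{z : ℂ | z.im < 0}] (x:ℂ)) := by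
      rw [tendsto_nhdsWithin_iff]
      refine ⟨hmap, ?_⟩
      filter_upwards [self_mem_nhdsWithin] with ε (hε : ε ∈ Iio 0)
      simpa [Set.mem_setOf_eq] using hε
    exact ⟨_, (Complex.tendsto_log_nhdsWithin_im_neg_of_re_neg_of_im_zero
        (z := (x:ℂ)) (by simpa using hneg) (by simp)).comp h2⟩
  · exact ⟨_, (continuousAt_clog (Or.inl (by simpa using hpos))).tendsto.comp hmap⟩

lemma ae_cos_ne : ∀ᵐ θ : ℝ, Real.cos (2*θ) ≠ 0 := by
  have hc : {θ : ℝ | Real.cos (2*θ) = 0}.Countable := by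
    have hsub : {θ : ℝ | Real.cos (2*θ) = 0} ⊆
        Set.range (fun k : ℤ => ((2*(k:ℝ)+1) * π / 2)/2) := by
      intro θ hθ
      rw [Set.mem_setOf_eq, Real.cos_eq_zero_iff] at hθ
      obtain ⟨k, hk⟩ := hθ
      exact ⟨k, by linarith [hk]⟩
    exact (Set.countable_range _).mono hsub
  have h0 := hc.measure_zero (volume : Measure ℝ)
  rw [MeasureTheory.ae_iff]
  simpa using h0

lemma ibp_eq {a b : ℝ} (hab : a < b) {u v v' : ℝ → ℂ}
    (hu : ContDiffOn ℝ (⊤ : ℕ∞) u (Set.Icc a b))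
    (hv : ContinuousOn v (Set.Icc a b)) (hv'c : ContinuousOn v' (Set.Icc a b))
    (hv' : ∀ θ ∈ Set.Ioo a b, HasDerivAt v (v' θ) θ) :
    ∫ θ in a..b, u θ * v' θ
      = u b * v b - u a * v a - ∫ θ in a..b, derivWithin u (Set.Icc a b) θ * v θ := by
  set u' := derivWithin u (Set.Icc a b) with hu'def
  have hu'c : ContinuousOn u' (Set.Icc a b) :=
    (hu.derivWithin (uniqueDiffOn_Icc hab) (m := (⊤ : ℕ∞)) (by simp)).continuousOn
  have huc : ContinuousOn u (Set.Icc a b) := hu.continuousOn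
  have hudiff : ∀ θ ∈ Set.Ioo a b, HasDerivAt u (u' θ) θ := by
    intro θ hθ
    have hmem : Set.Icc a b ∈ 𝓝 θ := Icc_mem_nhds hθ.1 hθ.2
    have hda := ((hu.differentiableOn (by simp)) θ (Set.Ioo_subset_Icc_self hθ)).differentiableAt hmem
    have hd : derivWithin u (Set.Icc a b) θ = deriv u θ := derivWithin_of_mem_nhds hmem
    rw [hu'def, hd]
    exact hda.hasDerivAt
  have hF : ContinuousOn (fun θ => u θ * v θ) (Set.Icc a b) := huc.mul hv
  have hF' : ∀ θ ∈ Set.Ioo a b, HasDerivWithinAt (fun θ => u θ * v θ)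
      (u' θ * v θ + u θ * v' θ) (Set.Ioi θ) θ :=
    fun θ hθ => ((hudiff θ hθ).mul (hv' θ hθ)).hasDerivWithinAt
  have hint1 : IntervalIntegrable (fun θ => u' θ * v θ) volume a b := by
    apply ContinuousOn.intervalIntegrable
    rw [uIcc_of_le hab.le]; exact hu'c.mul hv
  have hint2 : IntervalIntegrable (fun θ => u θ * v' θ) volume a b := by
    apply ContinuousOn.intervalIntegrable
    rw [uIcc_of_le hab.le]; exact huc.mul hv'c
  have key := intervalIntegral.integral_eq_sub_of_hasDeriv_right_of_le hab.le hF hF'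
    (hint1.add hint2)
  rw [intervalIntegral.integral_add hint1 hint2] at key
  linear_combination key

lemma dct_aux {a b : ℝ} (l : Filter ℝ) [l.NeBot] [l.IsCountablyGenerated]
    (F : ℝ → ℝ → ℂ) (bound : ℝ → ℝ)
    (hFmeas : ∀ᶠ ε in l, AEStronglyMeasurable (F ε) (volume.restrict (Set.uIoc a b)))
    (hbound : ∀ᶠ ε in l, ∀ᵐ θ : ℝ, θ ∈ Set.uIoc a b → ‖F ε θ‖ ≤ bound θ)
    (hbi : IntervalIntegrable bound volume a b)
    (hlim : ∀ᵐ θ : ℝ, θ ∈ Set.uIoc a b → ∃ c, Tendsto (fun ε => F ε θ) l (𝓝 c)) :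
    ∃ L, Tendsto (fun ε => ∫ θ in a..b, F ε θ) l (𝓝 L) := by
  refine ⟨∫ θ in a..b, limUnder l (fun ε => F ε θ), ?_⟩
  apply intervalIntegral.tendsto_integral_filter_of_dominated_convergence bound hFmeas hbound hbi
  filter_upwards [hlim] with θ hθ hmem
  obtain ⟨c, hc⟩ := hθ hmem
  rwa [hc.limUnder_eq]

lemma key {a b : ℝ} (hab : a < b)
    (hsin : ∀ θ ∈ Set.Icc a b, 0 < Real.sin (2*θ))
    (ha0 : Real.cos (2*a) ≠ 0) (hb0 : Real.cos (2*b) ≠ 0)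
    (hmeas : IntervalIntegrable (fun θ => abs (Real.log (abs (Real.cos (2*θ))))) volume a b)
    (l : Filter ℝ) [l.NeBot] [l.IsCountablyGenerated]
    (hl : l ≤ 𝓝 0) (hl0 : ∀ᶠ ε in l, ε ≠ 0)
    (hlog : ∀ x : ℝ, x ≠ 0 →
      ∃ w, Tendsto (fun ε : ℝ => Complex.log ((x:ℂ) + (ε:ℂ)*Complex.I)) l (𝓝 w)) :
    ∀ n : ℕ, ∀ h : ℝ → ℂ, ContDiffOn ℝ (⊤ : ℕ∞) h (Set.Icc a b) →
      ∃ L, Tendsto (fun ε : ℝ => ∫ θ in a..b,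
        h θ * (((Real.cos (2*θ):ℝ):ℂ) + (ε:ℂ)*Complex.I) ^ ((1 - (n:ℂ))/2)) l (𝓝 L) := by
  -- common facts
  have hIsub : Set.uIoc a b ⊆ Set.Icc a b := by
    rw [uIoc_of_le hab.le]; exact Set.Ioc_subset_Icc_self
  have hsmall : ∀ᶠ ε : ℝ in l, |ε| ≤ 1 ∧ ε ≠ 0 := by
    have h1 : ∀ᶠ ε : ℝ in l, |ε| ≤ 1 := by
      have hmem : Set.Icc (-1:ℝ) 1 ∈ 𝓝 (0:ℝ) := Icc_mem_nhds (by norm_num) (by norm_num)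
      filter_upwards [hl hmem] with ε hε
      rw [abs_le]; exact hε
    exact h1.and hl0
  have hφc : ∀ ε : ℝ, Continuous fun θ : ℝ => (((Real.cos (2*θ):ℝ):ℂ) + (ε:ℂ)*Complex.I) :=
    fun ε => ((Complex.continuous_ofReal.comp
      (Real.continuous_cos.comp (continuous_const.mul continuous_id))).add continuous_const)
  have hφabs : ∀ {ε : ℝ}, |ε| ≤ 1 → ∀ θ : ℝ,
      ‖(((Real.cos (2*θ):ℝ):ℂ) + (ε:ℂ)*Complex.I)‖ ≤ 2 := by
    intro ε hε θ
    refine le_trans (Complex.norm_le_abs_re_add_abs_im _) ?_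
    rw [mk_re, mk_im]
    have := Real.abs_cos_le_one (2*θ)
    linarith
  have hpowc : ∀ {ε : ℝ}, ε ≠ 0 → ∀ (e : ℂ),
      Continuous fun θ : ℝ => (((Real.cos (2*θ):ℝ):ℂ) + (ε:ℂ)*Complex.I) ^ e :=
    fun {ε} hε e => (hφc ε).cpow continuous_const (fun θ => mk_mem_slit hε _)
  have hsin_cd : ContDiff ℝ (⊤ : ℕ∞) fun θ : ℝ => ((Real.sin (2*θ):ℝ):ℂ) :=
    Complex.ofRealCLM.contDiff.comp (Real.contDiff_sin.comp (contDiff_const.mul contDiff_id))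
  have hφd : ∀ (ε : ℝ) (θ : ℝ), HasDerivAt (fun θ : ℝ => (((Real.cos (2*θ):ℝ):ℂ) + (ε:ℂ)*Complex.I))
      ((-Real.sin (2*θ) * 2 : ℝ) : ℂ) θ := by
    intro ε θ
    have h0 : HasDerivAt (fun θ : ℝ => 2*θ) 2 θ := by
      simpa using (hasDerivAt_id θ).const_mul (2:ℝ)
    have h1 : HasDerivAt (fun θ : ℝ => Real.cos (2*θ)) (-Real.sin (2*θ) * 2) θ :=
      (Real.hasDerivAt_cos (2*θ)).comp θ h0
    exact (h1.ofReal_comp).add_const _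
  intro n
  induction n using Nat.strong_induction_on with
  | _ n IH =>
  intro h hh
  match n, IH with
  | 0, _ =>
    -- exponent 1/2 : dominated convergence
    have he : (1 - ((0:ℕ):ℂ))/2 = (((1:ℝ)/2 : ℝ) : ℂ) := by push_cast; norm_num
    simp only [he]
    obtain ⟨M, hM⟩ := isCompact_Icc.exists_bound_of_continuousOn hh.continuousOn
    have hM0 : 0 ≤ M := le_trans (norm_nonneg _) (hM a (Set.left_mem_Icc.mpr hab.le))
    apply dct_aux l _ (fun _ => M * 2)
    · filter_upwards [hl0] with ε hε
      apply ContinuousOn.aestronglyMeasurable _ measurableSet_uIoc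
      exact ContinuousOn.mul (hh.continuousOn.mono hIsub) (hpowc hε _).continuousOn
    · filter_upwards [hsmall] with ε hε
      filter_upwards [] with θ hmem
      rw [norm_mul]
      have h1 : ‖h θ‖ ≤ M := hM θ (hIsub hmem)
      have h2 : ‖(((Real.cos (2*θ):ℝ):ℂ) + (ε:ℂ)*Complex.I) ^ ((((1:ℝ)/2 : ℝ)):ℂ)‖ ≤ 2 := by
        rw [Complex.norm_cpow_of_ne_zero (mk_ne_zero_of_eps hε.2 _)]
        simp only [Complex.ofReal_re, Complex.ofReal_im, mul_zero, Real.exp_zero, div_one]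
        calc ‖(((Real.cos (2*θ):ℝ):ℂ) + (ε:ℂ)*Complex.I)‖ ^ ((1:ℝ)/2) ≤ (2:ℝ) ^ ((1:ℝ)/2) :=
              Real.rpow_le_rpow (norm_nonneg _) (hφabs hε.1 θ) (by norm_num)
          _ ≤ (2:ℝ) ^ ((1:ℝ)) := Real.rpow_le_rpow_of_exponent_le (by norm_num) (by norm_num)
          _ = 2 := Real.rpow_one 2
      exact mul_le_mul h1 h2 (norm_nonneg _) hM0
    · exact intervalIntegrable_const
    · filter_upwards [ae_cos_ne] with θ hθ hmem
      obtain ⟨c, hc⟩ := tendsto_cpow_of_log hθ (hlog _ hθ) ((((1:ℝ)/2 : ℝ)):ℂ)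
      exact ⟨_, tendsto_const_nhds.mul hc⟩
  | 1, _ =>
    have he : (1 - ((1:ℕ):ℂ))/2 = 0 := by push_cast; norm_num
    simp only [he, Complex.cpow_zero, mul_one]
    exact ⟨_, tendsto_const_nhds⟩
  | (m+2), IH =>
    by_cases hm : m = 1
    · -- log case : exponent -1
      subst hm
      have hexp : (1 - ((1+2:ℕ):ℂ))/2 = -1 := by norm_num
      set u : ℝ → ℂ := fun θ => h θ * ((-2) * ((Real.sin (2*θ):ℝ):ℂ))⁻¹ with hu_def
      have hu : ContDiffOn ℝ (⊤ : ℕ∞) u (Set.Icc a b) := by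
        apply hh.mul
        apply ContDiffOn.inv
        · exact (contDiff_const.mul hsin_cd).contDiffOn
        · intro θ hθ
          exact mul_ne_zero (by norm_num) (Complex.ofReal_ne_zero.mpr (hsin θ hθ).ne')
      have hu' : ContDiffOn ℝ (⊤ : ℕ∞) (derivWithin u (Set.Icc a b)) (Set.Icc a b) :=
        hu.derivWithin (uniqueDiffOn_Icc hab) (m := (⊤ : ℕ∞)) (by simp)
      have hGeq : ∀ ε : ℝ, ε ≠ 0 →
          (∫ θ in a..b, h θ * (((Real.cos (2*θ):ℝ):ℂ) + (ε:ℂ)*Complex.I) ^ ((1 - ((1+2:ℕ):ℂ))/2))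
            = u b * Complex.log (((Real.cos (2*b):ℝ):ℂ) + (ε:ℂ)*Complex.I)
              - u a * Complex.log (((Real.cos (2*a):ℝ):ℂ) + (ε:ℂ)*Complex.I)
              - ∫ θ in a..b, derivWithin u (Set.Icc a b) θ
                  * Complex.log (((Real.cos (2*θ):ℝ):ℂ) + (ε:ℂ)*Complex.I) := by
        intro ε hε
        have hvd : ∀ θ ∈ Set.Ioo a b,
            HasDerivAt (fun θ : ℝ => Complex.log (((Real.cos (2*θ):ℝ):ℂ) + (ε:ℂ)*Complex.I))
              (((-Real.sin (2*θ) * 2 : ℝ) : ℂ)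
                / (((Real.cos (2*θ):ℝ):ℂ) + (ε:ℂ)*Complex.I)) θ :=
          fun θ _ => (hφd ε θ).clog_real (mk_mem_slit hε _)
        have hvc : ContinuousOn
            (fun θ : ℝ => Complex.log (((Real.cos (2*θ):ℝ):ℂ) + (ε:ℂ)*Complex.I))
            (Set.Icc a b) := ((hφc ε).clog (fun θ => mk_mem_slit hε _)).continuousOn
        have hv'c : ContinuousOn
            (fun θ : ℝ => ((-Real.sin (2*θ) * 2 : ℝ) : ℂ)
              / (((Real.cos (2*θ):ℝ):ℂ) + (ε:ℂ)*Complex.I)) (Set.Icc a b) := by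
          apply ContinuousOn.div
          · exact (Complex.continuous_ofReal.comp
              ((Real.continuous_sin.comp (continuous_const.mul continuous_id)).neg.mul
                continuous_const)).continuousOn
          · exact (hφc ε).continuousOn
          · intro θ _; exact mk_ne_zero_of_eps hε _
        have hibp := ibp_eq hab hu hvc hv'c hvd
        rw [← hibp]
        apply intervalIntegral.integral_congr
        intro θ hθ
        rw [uIcc_of_le hab.le] at hθ
        have hsθ : ((Real.sin (2*θ):ℝ):ℂ) ≠ 0 := Complex.ofReal_ne_zero.mpr (hsin θ hθ).ne'
        have hφne : (((Real.cos (2*θ):ℝ):ℂ) + (ε:ℂ)*Complex.I) ≠ 0 := mk_ne_zero_of_eps hε _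
        simp only [hexp, Complex.cpow_neg_one, hu_def]
        push_cast at hsθ hφne ⊢
        field_simp [hsθ, hφne]
      obtain ⟨wb, hwb⟩ := hlog _ hb0
      obtain ⟨wa, hwa⟩ := hlog _ ha0
      -- the integral term, by dominated convergence
      obtain ⟨M, hM⟩ := isCompact_Icc.exists_bound_of_continuousOn hu'.continuousOn
      have hM0 : 0 ≤ M := le_trans (norm_nonneg _) (hM a (Set.left_mem_Icc.mpr hab.le))
      obtain ⟨L', hL'⟩ : ∃ L', Tendsto (fun ε : ℝ => ∫ θ in a..b,
          derivWithin u (Set.Icc a b) θ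
            * Complex.log (((Real.cos (2*θ):ℝ):ℂ) + (ε:ℂ)*Complex.I)) l (𝓝 L') := by
        apply dct_aux l _ (fun θ => M * (abs (Real.log (abs (Real.cos (2*θ)))) + (1 + π)))
        · filter_upwards [hl0] with ε hε
          apply ContinuousOn.aestronglyMeasurable _ measurableSet_uIoc
          exact ContinuousOn.mul (hu'.continuousOn.mono hIsub)
            (((hφc ε).clog (fun θ => mk_mem_slit hε _)).continuousOn)
        · filter_upwards [hsmall] with ε hε
          filter_upwards [ae_cos_ne] with θ hθ hmem
          rw [norm_mul]
          have h1 : ‖derivWithin u (Set.Icc a b) θ‖ ≤ M := hM θ (hIsub hmem)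
          have hφne : (((Real.cos (2*θ):ℝ):ℂ) + (ε:ℂ)*Complex.I) ≠ 0 := mk_ne_zero_of_eps hε.2 _
          have hφpos : 0 < ‖(((Real.cos (2*θ):ℝ):ℂ) + (ε:ℂ)*Complex.I)‖ :=
            norm_pos_iff.mpr hφne
          have hcpos : (0:ℝ) < abs (Real.cos (2*θ)) := abs_pos.mpr hθ
          have hlow : Real.log (abs (Real.cos (2*θ)))
              ≤ Real.log (‖(((Real.cos (2*θ):ℝ):ℂ) + (ε:ℂ)*Complex.I)‖) := by
            apply Real.log_le_log hcpos
            have := Complex.abs_re_le_norm (((Real.cos (2*θ):ℝ):ℂ) + (ε:ℂ)*Complex.I)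
            rwa [mk_re] at this
          have hup : Real.log (‖(((Real.cos (2*θ):ℝ):ℂ) + (ε:ℂ)*Complex.I)‖) ≤ 1 := by
            calc Real.log _ ≤ Real.log 2 := Real.log_le_log hφpos (hφabs hε.1 θ)
              _ ≤ 1 := by linarith [Real.log_le_sub_one_of_pos (by norm_num : (0:ℝ) < 2)]
          have h2 : ‖Complex.log (((Real.cos (2*θ):ℝ):ℂ) + (ε:ℂ)*Complex.I)‖
              ≤ abs (Real.log (abs (Real.cos (2*θ)))) + (1 + π) := by
            refine le_trans (Complex.norm_le_abs_re_add_abs_im _) ?_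
            rw [Complex.log_re, Complex.log_im]
            have harg := Complex.abs_arg_le_pi (((Real.cos (2*θ):ℝ):ℂ) + (ε:ℂ)*Complex.I)
            have hlabs : |Real.log (‖(((Real.cos (2*θ):ℝ):ℂ) + (ε:ℂ)*Complex.I)‖)|
                ≤ abs (Real.log (abs (Real.cos (2*θ)))) + 1 := by
              rw [abs_le]
              constructor
              · have := neg_abs_le (Real.log (abs (Real.cos (2*θ))))
                linarith
              · have := abs_nonneg (Real.log (abs (Real.cos (2*θ))))
                linarith
            linarith
          exact mul_le_mul h1 h2 (norm_nonneg _) hM0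
        · exact ((hmeas.add intervalIntegrable_const).const_mul M)
        · filter_upwards [ae_cos_ne] with θ hθ hmem
          obtain ⟨c, hc⟩ := hlog _ hθ
          exact ⟨_, tendsto_const_nhds.mul hc⟩
      refine ⟨u b * wb - u a * wa - L', ?_⟩
      apply Tendsto.congr' ?_
        (((tendsto_const_nhds.mul hwb).sub (tendsto_const_nhds.mul hwa)).sub hL')
      filter_upwards [hl0] with ε hε
      exact (hGeq ε hε).symm
    · -- power case : exponent s - 1 with s = (1-m)/2 ≠ 0
      set s : ℂ := (1 - (m:ℂ))/2 with hs_def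
      have hs : s ≠ 0 := by
        rw [hs_def, div_ne_zero_iff]
        refine ⟨?_, by norm_num⟩
        rw [sub_ne_zero]
        intro hcon
        exact hm (by exact_mod_cast hcon.symm)
      set u : ℝ → ℂ := fun θ => h θ * ((-2) * s * ((Real.sin (2*θ):ℝ):ℂ))⁻¹ with hu_def
      have hu : ContDiffOn ℝ (⊤ : ℕ∞) u (Set.Icc a b) := by
        apply hh.mul
        apply ContDiffOn.inv
        · exact (contDiff_const.mul hsin_cd).contDiffOn
        · intro θ hθ
          exact mul_ne_zero (mul_ne_zero (by norm_num) hs)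
            (Complex.ofReal_ne_zero.mpr (hsin θ hθ).ne')
      have hu' : ContDiffOn ℝ (⊤ : ℕ∞) (derivWithin u (Set.Icc a b)) (Set.Icc a b) :=
        hu.derivWithin (uniqueDiffOn_Icc hab) (m := (⊤ : ℕ∞)) (by simp)
      have hGeq : ∀ ε : ℝ, ε ≠ 0 →
          (∫ θ in a..b, h θ * (((Real.cos (2*θ):ℝ):ℂ) + (ε:ℂ)*Complex.I) ^ ((1 - ((m+2:ℕ):ℂ))/2))
            = u b * (((Real.cos (2*b):ℝ):ℂ) + (ε:ℂ)*Complex.I) ^ s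
              - u a * (((Real.cos (2*a):ℝ):ℂ) + (ε:ℂ)*Complex.I) ^ s
              - ∫ θ in a..b, derivWithin u (Set.Icc a b) θ
                  * (((Real.cos (2*θ):ℝ):ℂ) + (ε:ℂ)*Complex.I) ^ s := by
        intro ε hε
        have hvd : ∀ θ ∈ Set.Ioo a b,
            HasDerivAt (fun θ : ℝ => (((Real.cos (2*θ):ℝ):ℂ) + (ε:ℂ)*Complex.I) ^ s)
              (s * (((Real.cos (2*θ):ℝ):ℂ) + (ε:ℂ)*Complex.I) ^ (s-1)
                * ((-Real.sin (2*θ) * 2 : ℝ) : ℂ)) θ := by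
          intro θ _
          have := ((Complex.hasStrictDerivAt_cpow_const (c := s)
            (mk_mem_slit hε (Real.cos (2*θ)))).hasDerivAt).comp θ (hφd ε θ)
          exact this
        have hvc : ContinuousOn
            (fun θ : ℝ => (((Real.cos (2*θ):ℝ):ℂ) + (ε:ℂ)*Complex.I) ^ s)
            (Set.Icc a b) := (hpowc hε s).continuousOn
        have hv'c : ContinuousOn
            (fun θ : ℝ => s * (((Real.cos (2*θ):ℝ):ℂ) + (ε:ℂ)*Complex.I) ^ (s-1)
              * ((-Real.sin (2*θ) * 2 : ℝ) : ℂ)) (Set.Icc a b) := by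
          apply ContinuousOn.mul
          · exact (continuous_const.mul (hpowc hε (s-1))).continuousOn
          · exact (Complex.continuous_ofReal.comp
              ((Real.continuous_sin.comp (continuous_const.mul continuous_id)).neg.mul
                continuous_const)).continuousOn
        have hibp := ibp_eq hab hu hvc hv'c hvd
        rw [← hibp]
        apply intervalIntegral.integral_congr
        intro θ hθ
        rw [uIcc_of_le hab.le] at hθ
        have hsθ : ((Real.sin (2*θ):ℝ):ℂ) ≠ 0 := Complex.ofReal_ne_zero.mpr (hsin θ hθ).ne'
        have hexp : (1 - ((m+2:ℕ):ℂ))/2 = s - 1 := by rw [hs_def]; push_cast; ring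
        simp only [hexp, hu_def]
        have h1m : (1:ℂ) - (m:ℂ) ≠ 0 := fun hcon => hs (by rw [hs_def, hcon, zero_div])
        push_cast at hsθ ⊢
        field_simp [hsθ, h1m]
      obtain ⟨wb, hwb⟩ := tendsto_cpow_of_log hb0 (hlog _ hb0) s
      obtain ⟨wa, hwa⟩ := tendsto_cpow_of_log ha0 (hlog _ ha0) s
      obtain ⟨L', hL'⟩ := IH m (by omega) (derivWithin u (Set.Icc a b)) hu'
      rw [← hs_def] at hL'
      refine ⟨u b * wb - u a * wa - L', ?_⟩
      apply Tendsto.congr' ?_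
        (((tendsto_const_nhds.mul hwb).sub (tendsto_const_nhds.mul hwa)).sub hL')
      filter_upwards [hl0] with ε hε
      exact (hGeq ε hε).symm

lemma ptbound {θ₀ θ : ℝ} (hθ₀' : θ₀ < π/4) (hθ : θ ∈ Set.Icc (π/4-θ₀) (π/4+θ₀)) :
    abs (Real.log (abs (Real.cos (2*θ)))) ≤ abs (Real.log (4/π)) + 2 * |θ - π/4| ^ (-(1/2) : ℝ) := by
  have hπ := Real.pi_pos
  by_cases hc : Real.cos (2*θ) = 0
  · rw [hc, abs_zero, Real.log_zero, abs_zero]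
    positivity
  · have htne : θ ≠ π/4 := by
      intro he
      apply hc
      rw [he, show 2*(π/4) = π/2 by ring, Real.cos_pi_div_two]
    set t := |θ - π/4| with ht_def
    have ht0 : 0 < t := abs_pos.mpr (sub_ne_zero.mpr htne)
    have h2 : |π/2 - 2*θ| ≤ π/2 := by
      rw [abs_le]
      constructor
      · nlinarith [hθ.2]
      · nlinarith [hθ.1]
    have h3 := Real.mul_abs_le_abs_sin h2
    have h4 : (4/π) * t ≤ abs (Real.cos (2*θ)) := by
      have hcs : Real.cos (2*θ) = Real.sin (π/2 - 2*θ) := (Real.sin_pi_div_two_sub (2*θ)).symm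
      rw [hcs]
      have habs2 : |π/2 - 2*θ| = 2 * t := by
        rw [ht_def, show π/2 - 2*θ = 2 * (π/4 - θ) by ring, abs_mul, abs_sub_comm θ (π/4)]
        norm_num
      calc (4/π) * t = 2/π * (2*t) := by ring
        _ ≤ |Real.sin (π/2 - 2*θ)| := by rw [← habs2]; exact h3
    have hcpos : (0:ℝ) < abs (Real.cos (2*θ)) := abs_pos.mpr hc
    have h5 : Real.log ((4/π) * t) ≤ Real.log (abs (Real.cos (2*θ))) :=
      Real.log_le_log (by positivity) h4
    have h6 : Real.log (abs (Real.cos (2*θ))) ≤ 0 :=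
      Real.log_nonpos (abs_nonneg _) (Real.abs_cos_le_one _)
    rw [abs_of_nonpos h6]
    have h8 : Real.log ((4/π)*t) = Real.log (4/π) + Real.log t :=
      Real.log_mul (by positivity) ht0.ne'
    have h9 : - Real.log t ≤ 2 * t ^ (-(1/2) : ℝ) := by
      have h10 : Real.log (t ^ (-(1/2):ℝ)) ≤ t ^ (-(1/2):ℝ) - 1 :=
        Real.log_le_sub_one_of_pos (Real.rpow_pos_of_pos ht0 _)
      rw [Real.log_rpow ht0] at h10
      nlinarith [Real.rpow_pos_of_pos ht0 (-(1/2):ℝ)]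
    have h11 := neg_le_abs (Real.log (4/π))
    linarith

lemma hmeas_main {θ₀ : ℝ} (hθ₀ : 0 < θ₀) (hθ₀' : θ₀ < π/4) :
    IntervalIntegrable (fun θ => abs (Real.log (abs (Real.cos (2*θ)))))
      volume (π/4-θ₀) (π/4+θ₀) := by
  have hπ := Real.pi_pos
  have hmeasf : AEStronglyMeasurable (fun θ : ℝ => abs (Real.log (abs (Real.cos (2*θ)))))
      (volume : Measure ℝ) := by
    apply Measurable.aestronglyMeasurable
    exact (Real.measurable_log.comp
      ((Real.continuous_cos.comp (continuous_const.mul continuous_id)).abs.measurable)).abs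
  have hleft : IntervalIntegrable (fun θ => abs (Real.log (abs (Real.cos (2*θ)))))
      volume (π/4-θ₀) (π/4) := by
    have hbi : IntervalIntegrable
        (fun θ => abs (Real.log (4/π)) + 2 * (π/4 - θ) ^ (-(1/2) : ℝ))
        volume (π/4-θ₀) (π/4) := by
      apply IntervalIntegrable.add intervalIntegrable_const
      have h1 := ((intervalIntegral.intervalIntegrable_rpow'
        (a := 0) (b := θ₀) (r := -(1/2)) (by norm_num)).const_mul 2).comp_sub_left (π/4)
      simpa using h1.symm
    apply hbi.mono_fun hmeasf.restrict
    filter_upwards [MeasureTheory.ae_restrict_mem measurableSet_uIoc] with θ hθm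
    have hθm' : θ ∈ Set.Ioc (π/4-θ₀) (π/4) := by
      rwa [uIoc_of_le (by linarith)] at hθm
    have hpt := ptbound hθ₀' (θ := θ) ⟨hθm'.1.le, by linarith [hθm'.2]⟩
    have habs : |θ - π/4| = π/4 - θ := by
      rw [abs_sub_comm]; exact abs_of_nonneg (by linarith [hθm'.2])
    rw [habs] at hpt
    simp only [Real.norm_eq_abs, abs_abs]
    exact hpt.trans (le_abs_self _)
  have hright : IntervalIntegrable (fun θ => abs (Real.log (abs (Real.cos (2*θ)))))
      volume (π/4) (π/4+θ₀) := by
    have hbi : IntervalIntegrable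
        (fun θ => abs (Real.log (4/π)) + 2 * (θ - π/4) ^ (-(1/2) : ℝ))
        volume (π/4) (π/4+θ₀) := by
      apply IntervalIntegrable.add intervalIntegrable_const
      have h1 := ((intervalIntegral.intervalIntegrable_rpow'
        (a := 0) (b := θ₀) (r := -(1/2)) (by norm_num)).const_mul 2).comp_sub_right (π/4)
      simpa [add_comm] using h1
    apply hbi.mono_fun hmeasf.restrict
    filter_upwards [MeasureTheory.ae_restrict_mem measurableSet_uIoc] with θ hθm
    have hθm' : θ ∈ Set.Ioc (π/4) (π/4+θ₀) := by
      rwa [uIoc_of_le (by linarith)] at hθm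
    have hpt := ptbound hθ₀' (θ := θ) ⟨by linarith [hθm'.1], hθm'.2⟩
    have habs : |θ - π/4| = θ - π/4 := abs_of_nonneg (by linarith [hθm'.1])
    rw [habs] at hpt
    simp only [Real.norm_eq_abs, abs_abs]
    exact hpt.trans (le_abs_self _)
  exact hleft.trans hright

end Dist13

/-- for fixed `θ₀ ∈ (0, π/4)` and nonnegative integers `p, q`, and any
smooth function `g` on `[π/4-θ₀, π/4+θ₀]`, the limits as `ε → 0⁺` and as `ε → 0⁻` of
`∫_{π/4-θ₀}^{π/4+θ₀} g(θ) (cos 2θ + iε)^{-(p+q+3)/2} dθ` exist, where the half-integer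
power is `(w^{1/2})^{-(p+q+3)}` with `w^{1/2}` the square root with positive real
part. -/
theorem distribution_limits_exist (θ₀ : ℝ) (hθ₀ : 0 < θ₀) (hθ₀' : θ₀ < π / 4)
    (p q : ℕ) (g : ℝ → ℂ)
    (hg : ContDiffOn ℝ (⊤ : ℕ∞) g (Set.Icc (π / 4 - θ₀) (π / 4 + θ₀))) :
    (∃ L : ℂ, Tendsto (fun ε : ℝ =>
        ∫ θ in (π / 4 - θ₀)..(π / 4 + θ₀),
          g θ * ((((Real.cos (2 * θ) : ℝ) : ℂ) + (ε : ℂ) * Complex.I) ^ ((1 : ℂ) / 2))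
            ^ (-((p : ℤ) + (q : ℤ) + 3)))
      (nhdsWithin 0 (Set.Ioi 0)) (nhds L)) ∧
    (∃ L : ℂ, Tendsto (fun ε : ℝ =>
        ∫ θ in (π / 4 - θ₀)..(π / 4 + θ₀),
          g θ * ((((Real.cos (2 * θ) : ℝ) : ℂ) + (ε : ℂ) * Complex.I) ^ ((1 : ℂ) / 2))
            ^ (-((p : ℤ) + (q : ℤ) + 3)))
      (nhdsWithin 0 (Set.Iio 0)) (nhds L)) := by
  have hπ := Real.pi_pos
  have hab : π / 4 - θ₀ < π / 4 + θ₀ := by linarith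
  have hsin : ∀ θ ∈ Set.Icc (π / 4 - θ₀) (π / 4 + θ₀), 0 < Real.sin (2*θ) := by
    intro θ hθ
    apply Real.sin_pos_of_pos_of_lt_pi
    · nlinarith [hθ.1]
    · nlinarith [hθ.2]
  have ha0 : Real.cos (2*(π / 4 - θ₀)) ≠ 0 := by
    rw [show 2*(π / 4 - θ₀) = π/2 - 2*θ₀ by ring, Real.cos_pi_div_two_sub]
    exact (Real.sin_pos_of_pos_of_lt_pi (by linarith) (by linarith)).ne'
  have hb0 : Real.cos (2*(π / 4 + θ₀)) ≠ 0 := by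
    rw [show 2*(π / 4 + θ₀) = π/2 - (-(2*θ₀)) by ring, Real.cos_pi_div_two_sub, Real.sin_neg]
    exact neg_ne_zero.mpr (Real.sin_pos_of_pos_of_lt_pi (by linarith) (by linarith)).ne'
  have hpow : ∀ (ε : ℝ), ε ≠ 0 → ∀ θ : ℝ,
      g θ * ((((Real.cos (2 * θ) : ℝ) : ℂ) + (ε : ℂ) * Complex.I) ^ ((1 : ℂ) / 2))
          ^ (-((p : ℤ) + (q : ℤ) + 3))
        = g θ * ((((Real.cos (2 * θ) : ℝ) : ℂ) + (ε : ℂ) * Complex.I)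
            ^ ((1 - ((p+q+4:ℕ):ℂ))/2)) := by
    intro ε hε θ
    have hne := Dist13.mk_ne_zero_of_eps hε (Real.cos (2*θ))
    congr 1
    rw [Complex.cpow_def_of_ne_zero hne, Complex.cpow_def_of_ne_zero hne,
      ← Complex.exp_int_mul]
    congr 1
    push_cast
    ring
  constructor
  · have hl0 : ∀ᶠ ε : ℝ in 𝓝[>] (0:ℝ), ε ≠ 0 := by
      filter_upwards [self_mem_nhdsWithin] with ε (hε : ε ∈ Set.Ioi (0:ℝ))
      exact ne_of_gt hε
    obtain ⟨L, hL⟩ := Dist13.key hab hsin ha0 hb0 (Dist13.hmeas_main hθ₀ hθ₀')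
      (𝓝[>] (0:ℝ)) nhdsWithin_le_nhds hl0
      (fun x hx => Dist13.tendsto_log_pos hx) (p+q+4) g hg
    refine ⟨L, Tendsto.congr' ?_ hL⟩
    filter_upwards [hl0] with ε hε
    exact intervalIntegral.integral_congr (fun θ _ => (hpow ε hε θ).symm)
  · have hl0 : ∀ᶠ ε : ℝ in 𝓝[<] (0:ℝ), ε ≠ 0 := by
      filter_upwards [self_mem_nhdsWithin] with ε (hε : ε ∈ Set.Iio (0:ℝ))
      exact ne_of_lt hε
    obtain ⟨L, hL⟩ := Dist13.key hab hsin ha0 hb0 (Dist13.hmeas_main hθ₀ hθ₀')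
      (𝓝[<] (0:ℝ)) nhdsWithin_le_nhds hl0
      (fun x hx => Dist13.tendsto_log_neg hx) (p+q+4) g hg
    refine ⟨L, Tendsto.congr' ?_ hL⟩
    filter_upwards [hl0] with ε hε
    exact intervalIntegral.integral_congr (fun θ _ => (hpow ε hε θ).symm)
end
end
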